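/- arXiv:2104.08133 — 11 statements merged into one kernel-verified Lean document; each statement's English description precedes it below -/
import Mathlib

section
/- Let A be a bounded normal operator on a Hilbert space H and g ∈ H. Then A is reduced with respect to the decomposition H = closure(K(A,g)) ⊕ K(A,g)-perp (i.e. both subspaces are A-invariant) if and only if A*g belongs to closure(K(A,g)). -/
/-- Proposition 2.1: a bounded normal operator `A` is reduced with respect to the Krylov
decomposition `H = closure(K(A,g)) ⊕ K(A,g)ᗮ` iff `A* g ∈ closure(K(A,g))`. -/
theorem stmt1 {H : Type*} [NormedAddCommGroup H] [InnerProductSpace ℂ H]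
    [CompleteSpace H] (A : H →L[ℂ] H)
    (hA : A.comp (ContinuousLinearMap.adjoint A) = (ContinuousLinearMap.adjoint A).comp A)
    (g : H) :
    ((∀ x ∈ (Submodule.span ℂ (Set.range fun k : ℕ => (A ^ k) g)).topologicalClosure,
        A x ∈ (Submodule.span ℂ (Set.range fun k : ℕ => (A ^ k) g)).topologicalClosure) ∧
     (∀ x ∈ (Submodule.span ℂ (Set.range fun k : ℕ => (A ^ k) g))ᗮ,
        A x ∈ (Submodule.span ℂ (Set.range fun k : ℕ => (A ^ k) g))ᗮ)) ↔
      ContinuousLinearMap.adjoint A g ∈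
        (Submodule.span ℂ (Set.range fun k : ℕ => (A ^ k) g)).topologicalClosure := by
  set K : Submodule ℂ H := Submodule.span ℂ (Set.range fun k : ℕ => (A ^ k) g) with hKdef
  have hgK : g ∈ K := Submodule.subset_span ⟨0, by simp⟩
  -- A maps K into K
  have hAK : ∀ x ∈ K, A x ∈ K := by
    intro x hx
    refine Submodule.span_induction ?_ (by simp) ?_ ?_ hx
    · rintro _ ⟨k, rfl⟩
      exact Submodule.subset_span ⟨k + 1, by
        simp [pow_succ', ContinuousLinearMap.mul_apply]⟩
    · intro a b _ _ ha hb
      simpa using K.add_mem ha hb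
    · intro c a _ ha
      simpa using K.smul_mem c ha
  -- hence A maps closure K into closure K
  have hAKc : ∀ x ∈ K.topologicalClosure, A x ∈ K.topologicalClosure := by
    intro x hx
    have hx' : x ∈ closure (K : Set H) := by
      rwa [← Submodule.topologicalClosure_coe]
    have : A x ∈ closure (K : Set H) := map_mem_closure A.continuous hx' hAK
    rwa [← Submodule.topologicalClosure_coe] at this
  -- powers of A map closure K into closure K
  have hAnKc : ∀ (k : ℕ), ∀ x ∈ K.topologicalClosure, (A ^ k) x ∈ K.topologicalClosure := by
    intro k
    induction k with
    | zero => exact fun x hx => hx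
    | succ n ih =>
        intro x hx
        have : (A ^ (n + 1)) x = A ((A ^ n) x) := by
          simp [pow_succ', ContinuousLinearMap.mul_apply]
        rw [this]
        exact hAKc _ (ih x hx)
  -- normality: adjoint A commutes with powers of A, pointwise
  have hcomm : ∀ (k : ℕ) (x : H),
      ContinuousLinearMap.adjoint A ((A ^ k) x) = (A ^ k) (ContinuousLinearMap.adjoint A x) := by
    intro k
    induction k with
    | zero => simp
    | succ n ih =>
        intro x
        have h1 : (A ^ (n + 1)) x = (A ^ n) (A x) := by
          simp [pow_succ, ContinuousLinearMap.mul_apply]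
        have hAx : A (ContinuousLinearMap.adjoint A x) = ContinuousLinearMap.adjoint A (A x) :=
          congrFun (congrArg DFunLike.coe hA) x
        rw [h1, ih (A x), ← hAx, ← ContinuousLinearMap.mul_apply, ← pow_succ,
          pow_succ', ContinuousLinearMap.mul_apply]
  -- closure K = Kᗮᗮ
  have hcl : Kᗮᗮ = K.topologicalClosure := Submodule.orthogonal_orthogonal_eq_closure K
  constructor
  · rintro ⟨-, h2⟩
    rw [← hcl]
    rw [Submodule.mem_orthogonal]
    intro x hx
    rw [ContinuousLinearMap.adjoint_inner_right]
    have hAx := h2 x hx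
    rw [Submodule.mem_orthogonal] at hAx
    have := hAx g hgK
    rw [← inner_conj_symm]
    simp [this]
  · intro hg
    refine ⟨hAKc, ?_⟩
    intro x hx
    rw [Submodule.mem_orthogonal]
    intro y hy
    rw [← ContinuousLinearMap.adjoint_inner_left]
    -- adjoint A y ∈ closure K for y ∈ K
    have hAyK : ContinuousLinearMap.adjoint A y ∈ K.topologicalClosure := by
      refine Submodule.span_induction ?_ (by simp) ?_ ?_ hy
      · rintro _ ⟨k, rfl⟩
        rw [hcomm k g]
        exact hAnKc k _ hg
      · intro a b _ _ ha hb
        simpa using K.topologicalClosure.add_mem ha hb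
      · intro c a _ ha
        simpa using K.topologicalClosure.smul_mem c ha
    -- x ∈ Kᗮ, u ∈ Kᗮᗮ ⇒ ⟪u, x⟫ = 0
    have : x ∈ (Kᗮᗮ)ᗮ := by
      rw [Submodule.mem_orthogonal]
      intro u hu
      rw [Submodule.mem_orthogonal] at hu
      have := hu x hx
      rw [← inner_conj_symm]
      simp [this]
    rw [Submodule.mem_orthogonal] at this
    exact this _ (hcl ▸ hAyK)
end

section
/- Let A ∈ B(H) be injective, g ∈ ran A, and let f be the unique solution to A f = g. If f belongs to the closure of K(A,g), then A·closure(K(A,g)) is dense in closure(K(A,g)). -/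
/-- Proposition 2.2(i): if `A` is bounded and injective, `g ∈ ran A`, and the unique solution
`f` of `A f = g` lies in `closure(K(A,g))`, then `A · closure(K(A,g))` is dense in
`closure(K(A,g))`. -/
theorem stmt2 {H : Type*} [NormedAddCommGroup H] [InnerProductSpace ℂ H]
    [CompleteSpace H] (A : H →L[ℂ] H) (hA : Function.Injective A)
    (g f : H) (hf : A f = g)
    (hfK : f ∈ (Submodule.span ℂ (Set.range fun k : ℕ => (A ^ k) g)).topologicalClosure) :
    ((Submodule.span ℂ (Set.range fun k : ℕ => (A ^ k) g)).topologicalClosure : Set H) ⊆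
      closure (A '' ((Submodule.span ℂ (Set.range fun k : ℕ => (A ^ k) g)).topologicalClosure : Set H)) := by
  set K := Submodule.span ℂ (Set.range fun k : ℕ => (A ^ k) g) with hK
  set S := K.topologicalClosure with hS
  have himg : A '' (S : Set H) = ((S.map (A : H →ₗ[ℂ] H)) : Set H) := by
    simp [Submodule.map_coe]
  rw [himg]
  have hKT : K ≤ (S.map (A : H →ₗ[ℂ] H)).topologicalClosure := by
    rw [hK]
    apply Submodule.span_le.2
    rintro x ⟨k, rfl⟩
    cases k with
    | zero =>
      simp only [pow_zero, ContinuousLinearMap.one_apply]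
      rw [← hf]
      exact Submodule.le_topologicalClosure _ ⟨f, hfK, rfl⟩
    | succ n =>
      have : (A ^ (n + 1)) g = A ((A ^ n) g) := by
        rw [pow_succ']; rfl
      show (A ^ (n + 1)) g ∈ _
      rw [this]
      exact Submodule.le_topologicalClosure _
        ⟨(A ^ n) g, K.le_topologicalClosure (Submodule.subset_span ⟨n, rfl⟩), rfl⟩
  have : S ≤ (S.map (A : H →ₗ[ℂ] H)).topologicalClosure :=
    Submodule.topologicalClosure_minimal _ hKT (Submodule.isClosed_topologicalClosure _)
  exact this
end

section
/- Let A ∈ B(H) be invertible with everywhere defined bounded inverse, g ∈ H, and f = A⁻¹g. Then f belongs to the closure of K(A,g) if and only if A·closure(K(A,g)) is dense in closure(K(A,g)). -/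
/-- Proposition 2.2(ii): if `A` is a bounded bijection with bounded inverse `B` and
`f = A⁻¹ g`, then `f ∈ closure(K(A,g))` iff `A · closure(K(A,g))` is dense in
`closure(K(A,g))`. -/
theorem stmt3 {H : Type*} [NormedAddCommGroup H] [InnerProductSpace ℂ H]
    [CompleteSpace H] (A B : H →L[ℂ] H)
    (hAB : A.comp B = ContinuousLinearMap.id ℂ H)
    (hBA : B.comp A = ContinuousLinearMap.id ℂ H) (g : H) :
    B g ∈ (Submodule.span ℂ (Set.range fun k : ℕ => (A ^ k) g)).topologicalClosure ↔
      ((Submodule.span ℂ (Set.range fun k : ℕ => (A ^ k) g)).topologicalClosure : Set H) ⊆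
        closure (A '' ((Submodule.span ℂ (Set.range fun k : ℕ => (A ^ k) g)).topologicalClosure : Set H)) := by
  set K : Submodule ℂ H := Submodule.span ℂ (Set.range fun k : ℕ => (A ^ k) g) with hK
  set M : Submodule ℂ H := K.topologicalClosure with hM
  have hAB' : ∀ x, A (B x) = x := fun x =>
    congrArg (fun T : H →L[ℂ] H => T x) hAB
  have hBA' : ∀ x, B (A x) = x := fun x =>
    congrArg (fun T : H →L[ℂ] H => T x) hBA
  have himg : A '' (M : Set H) = ((M.map (A : H →ₗ[ℂ] H)) : Set H) := rfl
  constructor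
  · intro hf
    have hN : K ≤ (M.map (A : H →ₗ[ℂ] H)).topologicalClosure := by
      rw [hK, Submodule.span_le]
      rintro _ ⟨k, rfl⟩
      refine Submodule.le_topologicalClosure _ ?_
      cases k with
      | zero =>
        simp only [pow_zero, ContinuousLinearMap.one_apply]
        exact ⟨B g, hf, hAB' g⟩
      | succ n =>
        refine ⟨(A ^ n) g, ?_, ?_⟩
        · exact K.le_topologicalClosure (Submodule.subset_span ⟨n, rfl⟩)
        · show (A : H →ₗ[ℂ] H) ((A ^ n) g) = (A ^ (n + 1)) g
          rw [pow_succ']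
          rfl
    have hMle : M ≤ (M.map (A : H →ₗ[ℂ] H)).topologicalClosure :=
      Submodule.topologicalClosure_minimal K hN
        (Submodule.isClosed_topologicalClosure _)
    intro x hx
    have := hMle hx
    rw [himg]
    exact this
  · intro h
    have hg : g ∈ (M : Set H) :=
      K.le_topologicalClosure (by
        refine Submodule.subset_span ⟨0, ?_⟩
        simp)
    have hg' : g ∈ closure (A '' (M : Set H)) := h hg
    have hBg : B g ∈ closure (B '' (A '' (M : Set H))) := by
      exact image_closure_subset_closure_image (s := A '' (M : Set H)) B.continuous ⟨g, hg', rfl⟩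
    have : B '' (A '' (M : Set H)) = (M : Set H) := by
      rw [← Set.image_comp]
      have : (B ∘ A : H → H) = id := funext hBA'
      rw [this, Set.image_id]
    rw [this] at hBg
    rwa [IsClosed.closure_eq (Submodule.isClosed_topologicalClosure _)] at hBg
end

section
/- Let A ∈ B(H) be injective and g ∈ ran A with unique solution f to Af = g. If the Krylov intersection closure(K(A,g)) ∩ A(K(A,g)-perp) is trivial, then f belongs to closure(K(A,g)). -/
/-!
Split `f = f₁ + f₂` with `f₁` the orthogonal projection of `f` onto `closure K` and
`f₂ ∈ (closure K)ᗮ ⊆ Kᗮ`. Since `K` is `A`-invariant, so is its closure, hence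
`A f₂ = g - A f₁ ∈ closure K`. Thus `A f₂` lies in the Krylov intersection, which is trivial,
so `f₂ = 0` by injectivity and `f = f₁ ∈ closure K`.
-/

open Submodule

section Krylov

variable {R M : Type*} [Semiring R] [AddCommMonoid M] [Module R M] [TopologicalSpace M]

abbrev krylovSubspace (A : M →L[R] M) (g : M) : Submodule R M :=
  span R (Set.range fun k : ℕ => (A ^ k) g)

lemma self_mem_krylovSubspace (A : M →L[R] M) (g : M) : g ∈ krylovSubspace A g :=
  subset_span ⟨0, by simp⟩

lemma krylovSubspace_mapsTo (A : M →L[R] M) (g : M) :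
    Set.MapsTo A (krylovSubspace A g) (krylovSubspace A g) := by
  have : (krylovSubspace A g).map (A : M →ₗ[R] M) ≤ krylovSubspace A g := by
    rw [map_span_le]
    rintro _ ⟨k, rfl⟩
    exact subset_span ⟨k + 1, by
      show (A ^ (k + 1)) g = A ((A ^ k) g)
      rw [pow_succ']
      rfl⟩
  exact fun x hx => this ⟨x, hx, rfl⟩

end Krylov

lemma Submodule.topologicalClosure_mapsTo {R M : Type*} [Semiring R] [AddCommMonoid M]
    [Module R M] [TopologicalSpace M] [ContinuousAdd M] [ContinuousConstSMul R M]
    {K : Submodule R M} {A : M →L[R] M} (hK : Set.MapsTo A K K) :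
    Set.MapsTo A K.topologicalClosure K.topologicalClosure := by
  simpa only [topologicalClosure_coe] using hK.closure A.continuous

lemma mem_topologicalClosure_of_inter_image_orthogonal_eq_zero {𝕜 H : Type*} [RCLike 𝕜]
    [NormedAddCommGroup H] [InnerProductSpace 𝕜 H] [CompleteSpace H]
    {A : H →L[𝕜] H} (hA : Function.Injective A) {K : Submodule 𝕜 H}
    (hKA : Set.MapsTo A K K) {f : H} (hfK : A f ∈ K)
    (hJ : (K.topologicalClosure : Set H) ∩ A '' (Kᗮ : Set H) = {0}) :
    f ∈ K.topologicalClosure := by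
  set Kc := K.topologicalClosure
  set f₁ := Kc.starProjection f
  have hf₁ : f₁ ∈ Kc := Kc.starProjection_apply_mem f
  have hf₂ : f - f₁ ∈ Kᗮ := by
    rw [← orthogonal_closure]
    exact Kc.sub_starProjection_mem_orthogonal f
  have hAf₂ : A (f - f₁) ∈ Kc := by
    rw [map_sub]
    exact Kc.sub_mem (K.le_topologicalClosure hfK) (topologicalClosure_mapsTo hKA hf₁)
  have hAf₂_mem : A (f - f₁) ∈ (Kc : Set H) ∩ A '' (Kᗮ : Set H) := ⟨hAf₂, f - f₁, hf₂, rfl⟩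
  rw [hJ] at hAf₂_mem
  have : f = f₁ := sub_eq_zero.mp (hA (hAf₂_mem.trans (map_zero A).symm))
  exact this ▸ hf₁

/-- Proposition 2.3(i): if `A` is bounded and injective, `A f = g`, and the Krylov
intersection `closure(K(A,g)) ∩ A(K(A,g)ᗮ)` is trivial, then `f ∈ closure(K(A,g))`. -/
theorem stmt4 {H : Type*} [NormedAddCommGroup H] [InnerProductSpace ℂ H]
    [CompleteSpace H] (A : H →L[ℂ] H) (hA : Function.Injective A)
    (g f : H) (hf : A f = g)
    (hJ : (((Submodule.span ℂ (Set.range fun k : ℕ => (A ^ k) g)).topologicalClosure : Set H) ∩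
            (A '' ((Submodule.span ℂ (Set.range fun k : ℕ => (A ^ k) g))ᗮ : Set H))) = {0}) :
    f ∈ (Submodule.span ℂ (Set.range fun k : ℕ => (A ^ k) g)).topologicalClosure :=
  mem_topologicalClosure_of_inter_image_orthogonal_eq_zero hA (krylovSubspace_mapsTo A g)
    (hf ▸ self_mem_krylovSubspace A g) hJ
end

section
/- Let A ∈ B(H) be invertible with bounded everywhere defined inverse and g ∈ H with f = A⁻¹g. If f ∈ closure(K(A,g)) then the Krylov intersection closure(K(A,g)) ∩ A(K(A,g)-perp) equals {0}. -/
/-- Proposition 2.3(ii), "only if" part: if `A` is a bounded bijection with bounded inverse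
`B`, and `f = B g ∈ closure(K(A,g))`, then the Krylov intersection
`closure(K(A,g)) ∩ A(K(A,g)ᗮ)` equals `{0}`. -/
theorem stmt5 {H : Type*} [NormedAddCommGroup H] [InnerProductSpace ℂ H]
    [CompleteSpace H] (A B : H →L[ℂ] H)
    (hAB : A.comp B = ContinuousLinearMap.id ℂ H)
    (hBA : B.comp A = ContinuousLinearMap.id ℂ H) (g : H)
    (hfK : B g ∈ (Submodule.span ℂ (Set.range fun k : ℕ => (A ^ k) g)).topologicalClosure) :
    (((Submodule.span ℂ (Set.range fun k : ℕ => (A ^ k) g)).topologicalClosure : Set H) ∩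
        (A '' ((Submodule.span ℂ (Set.range fun k : ℕ => (A ^ k) g))ᗮ : Set H))) = {0} := by
  set K := Submodule.span ℂ (Set.range fun k : ℕ => (A ^ k) g) with hK
  have hABx : ∀ x, A (B x) = x := fun x => congrFun (congrArg DFunLike.coe hAB) x
  have hBAx : ∀ x, B (A x) = x := fun x => congrFun (congrArg DFunLike.coe hBA) x
  -- B maps K into closure K
  have hBK : ∀ y ∈ K, B y ∈ K.topologicalClosure := by
    intro y hy
    induction hy using Submodule.span_induction with
    | mem x hx =>
      obtain ⟨k, rfl⟩ := hx
      cases k with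
      | zero => simpa using hfK
      | succ n =>
        have : B ((A ^ (n+1)) g) = (A ^ n) g := by
          rw [pow_succ']
          simp [hBAx]
        rw [this]
        exact K.le_topologicalClosure (Submodule.subset_span ⟨n, rfl⟩)
    | zero => simp
    | add x y _ _ hx hy => rw [map_add]; exact add_mem hx hy
    | smul c x _ hx => rw [map_smul]; exact Submodule.smul_mem _ _ hx
  ext x
  simp only [Set.mem_inter_iff, Set.mem_singleton_iff]
  constructor
  · rintro ⟨hxc, w, hw, rfl⟩
    -- w = B (A w) ∈ closure K
    have hwC : w ∈ K.topologicalClosure := by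
      have : B (A w) ∈ K.topologicalClosure := by
        have := map_mem_closure B.continuous hxc (fun y hy => hBK y hy)
        rwa [IsClosed.closure_eq K.isClosed_topologicalClosure] at this
      rwa [hBAx] at this
    -- closure K = Kᗮᗮ
    have hcc : K.topologicalClosure ≤ Kᗮᗮ :=
      K.topologicalClosure_minimal K.le_orthogonal_orthogonal Kᗮ.isClosed_orthogonal
    have hw0 : w = 0 :=
      inner_self_eq_zero.mp ((Submodule.mem_orthogonal _ _).mp (hcc hwC) w hw)
    simp [hw0]
  · rintro rfl
    exact ⟨Submodule.zero_mem _, 0, Submodule.zero_mem _, map_zero A⟩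
end

section
/- Let A ∈ B(H) satisfy ker A ⊂ ker A* (in particular A normal) and g ∈ ran A. Then there exists at most one f ∈ H with A f = g and f ∈ closure(K(A,g)). -/
/-!
Since `g = A f₁`, the Krylov space of `g` lies in `ran A`, so `f₁ - f₂` lies in
`closure (ran A)` and in `ker A ⊆ ker A*`; these meet only in `0` because
`ker A* = (ran A)ᗮ`.
-/

open ContinuousLinearMap

section

variable {𝕜 E F : Type*} [RCLike 𝕜]
  [NormedAddCommGroup E] [InnerProductSpace 𝕜 E] [CompleteSpace E]
  [NormedAddCommGroup F] [InnerProductSpace 𝕜 F] [CompleteSpace F]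

lemma ContinuousLinearMap.eq_zero_of_mem_closure_range_of_adjoint_apply_eq_zero
    (T : E →L[𝕜] F) {x : F} (hx : x ∈ T.range.topologicalClosure) (hTx : adjoint T x = 0) :
    x = 0 := by
  have hx_perp : x ∈ T.range.topologicalClosureᗮ := by
    rw [Submodule.orthogonal_closure, orthogonal_range]
    exact hTx
  exact (Submodule.mem_bot 𝕜).mp <|
    T.range.topologicalClosure.inf_orthogonal_eq_bot ▸ ⟨hx, hx_perp⟩

end

lemma ContinuousLinearMap.span_range_pow_apply_le_range {R M : Type*} [Semiring R]
    [TopologicalSpace M] [AddCommMonoid M] [Module R M] (A : M →L[R] M) (f : M) :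
    Submodule.span R (Set.range fun k : ℕ => (A ^ k) (A f)) ≤ A.range := by
  rw [Submodule.span_le]
  rintro _ ⟨k, rfl⟩
  exact ⟨(A ^ k) f, congr($((pow_mul_comm' A k).symm) f)⟩

/-- Proposition 2.6: if `A` is bounded with `ker A ⊆ ker A*` (in particular normal),
then there is at most one Krylov solution to `A f = g`. -/
theorem stmt7 {H : Type*} [NormedAddCommGroup H] [InnerProductSpace ℂ H]
    [CompleteSpace H] (A : H →L[ℂ] H)
    (hker : ∀ x : H, A x = 0 → ContinuousLinearMap.adjoint A x = 0)
    (g f₁ f₂ : H) (h1 : A f₁ = g)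
    (h1K : f₁ ∈ (Submodule.span ℂ (Set.range fun k : ℕ => (A ^ k) g)).topologicalClosure)
    (h2 : A f₂ = g)
    (h2K : f₂ ∈ (Submodule.span ℂ (Set.range fun k : ℕ => (A ^ k) g)).topologicalClosure) :
    f₁ = f₂ := by
  have hker_diff : A (f₁ - f₂) = 0 := by rw [map_sub, h1, h2, sub_self]
  have hclosure : f₁ - f₂ ∈ A.range.topologicalClosure := by
    subst h1
    exact Submodule.topologicalClosure_mono (A.span_range_pow_apply_le_range f₁) (sub_mem h1K h2K)
  exact sub_eq_zero.mp <|
    A.eq_zero_of_mem_closure_range_of_adjoint_apply_eq_zero hclosure (hker _ hker_diff)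
end

section
/- Let A ∈ B(H), g ∈ ran A, and suppose the Krylov intersection closure(K(A,g)) ∩ A(K(A,g)-perp) = {0}. If f₀ satisfies A f₀ = g and P is the orthogonal projection onto closure(K(A,g)), then P f₀ also satisfies A(P f₀) = g; in particular a Krylov solution exists. -/
/-!
Write `P` for the orthogonal projection onto `U = closure K(A,g)`. Since `f₀ - P f₀ ∈ Uᗮ = K(A,g)ᗮ`,
the vector `A (f₀ - P f₀)` lies in `A(K(A,g)ᗮ)`; it also equals `g - A (P f₀)`, which lies in `U`
because `g ∈ U` and `U` is `A`-invariant. The trivial Krylov intersection forces it to vanish.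
-/

open Module.End Submodule

theorem Module.End.span_range_pow_apply_mem_invtSubmodule {R M : Type*} [Semiring R]
    [AddCommMonoid M] [Module R M] (A : Module.End R M) (g : M) :
    span R (Set.range fun k : ℕ => (A ^ k) g) ∈ A.invtSubmodule := by
  rw [mem_invtSubmodule, span_le]
  rintro _ ⟨k, rfl⟩
  exact subset_span ⟨k + 1, by simp only [pow_succ', Module.End.mul_apply]⟩

theorem Submodule.apply_starProjection_eq_of_inter_image_orthogonal_subset_zero
    {𝕜 E : Type*} [RCLike 𝕜] [NormedAddCommGroup E] [InnerProductSpace 𝕜 E]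
    (U : Submodule 𝕜 E) [U.HasOrthogonalProjection] {A : E →ₗ[𝕜] E}
    (hU : U ∈ invtSubmodule A) {f : E} (hf : A f ∈ U)
    (hJ : (U : Set E) ∩ A '' (Uᗮ : Set E) ⊆ {0}) :
    A (U.starProjection f) = A f := by
  have hperp : f - U.starProjection f ∈ Uᗮ := U.sub_starProjection_mem_orthogonal f
  have hmemU : A (f - U.starProjection f) ∈ U := by
    rw [map_sub]
    exact U.sub_mem hf (hU (U.starProjection_apply_mem f))
  have hzero : A (f - U.starProjection f) = 0 := hJ ⟨hmemU, f - U.starProjection f, hperp, rfl⟩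
  rw [map_sub, sub_eq_zero] at hzero
  exact hzero.symm

/-- Proposition 2.5: if the Krylov intersection is trivial and `A f₀ = g`, then the
orthogonal projection of `f₀` onto `closure(K(A,g))` also solves the problem; in
particular a Krylov solution exists. -/
theorem stmt8 {H : Type*} [NormedAddCommGroup H] [InnerProductSpace ℂ H]
    [CompleteSpace H] (A : H →L[ℂ] H) (g f₀ : H) (hf₀ : A f₀ = g)
    (hJ : (((Submodule.span ℂ (Set.range fun k : ℕ => (A ^ k) g)).topologicalClosure : Set H) ∩
            (A '' ((Submodule.span ℂ (Set.range fun k : ℕ => (A ^ k) g))ᗮ : Set H))) = {0}) :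
    A (Submodule.orthogonalProjectionOnto
        ((Submodule.span ℂ (Set.range fun k : ℕ => (A ^ k) g)).topologicalClosure) f₀ : H) = g ∧
      ∃ f ∈ (Submodule.span ℂ (Set.range fun k : ℕ => (A ^ k) g)).topologicalClosure,
        A f = g := by
  set K := span ℂ (Set.range fun k : ℕ => (A ^ k) g)
  have hKinv : K ∈ invtSubmodule (A : H →ₗ[ℂ] H) := by
    simpa only [K, ← ContinuousLinearMap.toLinearMap_pow, ContinuousLinearMap.coe_coe] using
      span_range_pow_apply_mem_invtSubmodule (A : H →ₗ[ℂ] H) g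
  have hg : g ∈ K.topologicalClosure :=
    K.le_topologicalClosure (subset_span ⟨0, by simp⟩)
  rw [← orthogonal_closure] at hJ
  have hsol : A (K.topologicalClosure.starProjection f₀) = g :=
    (K.topologicalClosure.apply_starProjection_eq_of_inter_image_orthogonal_subset_zero
      (topologicalClosure_mem_invtSubmodule hKinv) (hf₀ ▸ hg) hJ.subset).trans hf₀
  exact ⟨hsol, _, K.topologicalClosure.starProjection_apply_mem f₀, hsol⟩
end

section
/- If A ∈ B(H) is self-adjoint and g ∈ ran A, then the inverse problem A f = g admits exactly one solution f with f ∈ closure(K(A,g)). -/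
/-!
The closure `K` of the Krylov space of `g` is an `A`-invariant closed subspace, hence so is `Kᗮ`,
since `A` is self-adjoint. Writing `g = A h` and `h = f + e` with `f ∈ K`, `e ∈ Kᗮ`, the vector
`A e = g - A f` lies in `K ∩ Kᗮ = 0`, so `A f = g`. For uniqueness, `K ⊆ closure (ran A) = (ker A)ᗮ`
because `ker A = ker A*`, and `A` is injective on `(ker A)ᗮ`.
-/

namespace ContinuousLinearMap

section Krylov

variable {R M : Type*} [Semiring R] [AddCommMonoid M] [Module R M] [TopologicalSpace M]

def krylovSpace (A : M →L[R] M) (g : M) : Submodule R M :=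
  Submodule.span R (Set.range fun k : ℕ => (A ^ k) g)

variable (A : M →L[R] M)

theorem mem_krylovSpace_self (g : M) : g ∈ A.krylovSpace g :=
  Submodule.subset_span ⟨0, by simp⟩

theorem krylovSpace_mem_invtSubmodule (g : M) :
    A.krylovSpace g ∈ Module.End.invtSubmodule (A : M →ₗ[R] M) := by
  rw [Module.End.mem_invtSubmodule_iff_map_le, krylovSpace, Submodule.map_span,
    Submodule.span_le]
  rintro _ ⟨_, ⟨k, rfl⟩, rfl⟩
  exact Submodule.subset_span ⟨k + 1, by simp [pow_succ']⟩

theorem krylovSpace_le_range {g : M} (hg : g ∈ A.range) :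
    A.krylovSpace g ≤ A.range := by
  obtain ⟨h, rfl⟩ := hg
  rw [krylovSpace, Submodule.span_le]
  rintro _ ⟨k, rfl⟩
  exact ⟨(A ^ k) h, (DFunLike.congr_fun (pow_mul_comm' A k) h).symm⟩

end Krylov

variable {𝕜 E F : Type*} [RCLike 𝕜] [NormedAddCommGroup E] [InnerProductSpace 𝕜 E]
  [NormedAddCommGroup F] [InnerProductSpace 𝕜 F]

theorem injOn_orthogonal_ker (T : E →L[𝕜] F) : Set.InjOn T T.kerᗮ := by
  intro x hx y hy hxy
  have hker : x - y ∈ T.ker := by simp [hxy]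
  rw [← sub_eq_zero, ← Submodule.mem_bot 𝕜, ← T.ker.inf_orthogonal_eq_bot]
  exact ⟨hker, T.kerᗮ.sub_mem hx hy⟩

theorem _root_.IsSelfAdjoint.topologicalClosure_krylovSpace_le_orthogonal_ker [CompleteSpace E]
    {A : E →L[𝕜] E} (hA : IsSelfAdjoint A) {g : E} (hg : g ∈ A.range) :
    (A.krylovSpace g).topologicalClosure ≤ A.kerᗮ := by
  rw [A.orthogonal_ker, hA.adjoint_eq]
  exact Submodule.topologicalClosure_mono (A.krylovSpace_le_range hg)

end ContinuousLinearMap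

theorem LinearMap.IsSymmetric.apply_starProjection_eq {𝕜 E : Type*} [RCLike 𝕜]
    [NormedAddCommGroup E] [InnerProductSpace 𝕜 E] {T : E →ₗ[𝕜] E} (hT : T.IsSymmetric)
    {K : Submodule 𝕜 E} [K.HasOrthogonalProjection] (hK : K ∈ Module.End.invtSubmodule T)
    {h : E} (hh : T h ∈ K) : T (K.starProjection h) = T h := by
  have hperp : T (h - K.starProjection h) ∈ Kᗮ :=
    hT.orthogonalComplement_mem_invtSubmodule hK (K.sub_starProjection_mem_orthogonal h)
  have hmem : T (h - K.starProjection h) ∈ K := by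
    rw [map_sub]
    exact K.sub_mem hh (hK (K.starProjection_apply_mem h))
  have hzero : T (h - K.starProjection h) = 0 := by
    simpa using K.orthogonal_disjoint.le_bot ⟨hmem, hperp⟩
  rw [map_sub, sub_eq_zero] at hzero
  exact hzero.symm

/-- Proposition 2.7: if `A` is bounded self-adjoint and `g ∈ ran A`, then the inverse
problem `A f = g` admits exactly one Krylov solution. -/
theorem stmt9 {H : Type*} [NormedAddCommGroup H] [InnerProductSpace ℂ H]
    [CompleteSpace H] (A : H →L[ℂ] H) (hA : IsSelfAdjoint A)
    (g : H) (hg : ∃ h : H, A h = g) :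
    ∃! f : H, A f = g ∧
      f ∈ (Submodule.span ℂ (Set.range fun k : ℕ => (A ^ k) g)).topologicalClosure := by
  obtain ⟨h, rfl⟩ := hg
  set K := (A.krylovSpace (A h)).topologicalClosure
  have hK : K ∈ Module.End.invtSubmodule (A : H →ₗ[ℂ] H) :=
    Submodule.topologicalClosure_mem_invtSubmodule (A.krylovSpace_mem_invtSubmodule _)
  have hgK : A h ∈ K := Submodule.le_topologicalClosure _ (A.mem_krylovSpace_self _)
  have : CompleteSpace K := (A.krylovSpace _).isClosed_topologicalClosure.completeSpace_coe
  have hsol : A (K.starProjection h) = A h := hA.isSymmetric.apply_starProjection_eq hK hgK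
  refine ⟨K.starProjection h, ⟨hsol, K.starProjection_apply_mem h⟩, ?_⟩
  rintro f ⟨hf, hfK⟩
  have hKker := hA.topologicalClosure_krylovSpace_le_orthogonal_ker ⟨h, rfl⟩
  exact A.injOn_orthogonal_ker (hKker hfK) (hKker (K.starProjection_apply_mem h))
    (hf.trans hsol.symm)
end

section
/- Let A be a K-class operator on H. Then for every g ∈ H the unique solution f = A⁻¹g of A f = g lies in the closure of K(A,g). -/
section aux
variable {R : Type*} [NormedRing R] [NormedAlgebra ℂ R] [CompleteSpace R]

omit [CompleteSpace R] in
lemma aux_tsum_mem (B : Subalgebra ℂ R) (hB : IsClosed (B : Set R)) {x : ℕ → R} {s : R}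
    (hx : ∀ n, x n ∈ B) (hs : HasSum x s) : s ∈ B := by
  refine hB.mem_of_tendsto hs.tendsto_sum_nat ?_
  exact Filter.Eventually.of_forall fun n => sum_mem fun i _ => hx i

lemma aux_key (B : Subalgebra ℂ R) (hB : IsClosed (B : Set R)) {x t : R} (u : Rˣ)
    (hfact : x = (1 - t) * ↑u) (ht : ‖t‖ < 1) (htB : t ∈ B) (huB : (↑u⁻¹ : R) ∈ B) :
    IsUnit x ∧ Ring.inverse x ∈ B := by
  have h1 : IsUnit x := hfact ▸ ((isUnit_one_sub_of_norm_lt_one ht).mul u.isUnit)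
  refine ⟨h1, ?_⟩
  have hv : x = ↑(Units.oneSub t ht * u) := by rw [hfact, Units.val_mul, Units.val_oneSub]
  have h2 : Ring.inverse x = ↑u⁻¹ * ↑(Units.oneSub t ht)⁻¹ := by
    rw [hv, Ring.inverse_unit, mul_inv_rev, Units.val_mul]
  have h3 : (↑(Units.oneSub t ht)⁻¹ : R) = Ring.inverse (1 - t) :=
    (NormedRing.inverse_one_sub t ht).symm
  rw [h2, h3]
  exact mul_mem huB (aux_tsum_mem B hB (fun n => pow_mem htB n)
    (hasSum_geom_series_inverse t ht))

lemma aux_resolvent_mem [NormOneClass R] (A : R) (W : Set ℂ)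
    (hspec : spectrum ℂ A ⊆ W) (hWcpt : IsCompact (closure W))
    (hconn : IsConnected ((closure W)ᶜ)) :
    ∀ z ∈ (closure W)ᶜ,
      Ring.inverse (algebraMap ℂ R z - A) ∈ (Algebra.adjoin ℂ {A}).topologicalClosure := by
  classical
  set B := (Algebra.adjoin ℂ {A}).topologicalClosure with hBdef
  have hBclosed : IsClosed (B : Set R) := Subalgebra.isClosed_topologicalClosure _
  have hAB : A ∈ B := (Algebra.adjoin ℂ {A}).le_topologicalClosure
    (Algebra.self_mem_adjoin_singleton ℂ A)
  have hres : ∀ z ∈ (closure W)ᶜ, IsUnit (algebraMap ℂ R z - A) := fun z hz => by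
    by_contra h
    exact hz (subset_closure (hspec (spectrum.mem_iff.mpr h)))
  set r : ℂ → R := fun z => Ring.inverse (algebraMap ℂ R z - A) with hrdef
  set S : Set ℂ := {z | IsUnit (algebraMap ℂ R z - A) ∧ r z ∈ B} with hSdef
  -- S is open
  have hSopen : IsOpen S := by
    rw [Metric.isOpen_iff]
    rintro z ⟨hu, hmem⟩
    obtain ⟨u, hu'⟩ := hu
    have hmem' : (↑u⁻¹ : R) ∈ B := by
      have hrz : (↑u⁻¹ : R) = r z := by
        rw [hrdef]; simp only; rw [← hu', Ring.inverse_unit]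
      rw [hrz]; exact hmem
    refine ⟨(‖(↑u⁻¹ : R)‖ + 1)⁻¹, by positivity, fun w hw => ?_⟩
    have h1 : ‖z - w‖ < (‖(↑u⁻¹ : R)‖ + 1)⁻¹ := by
      rw [Metric.mem_ball, dist_comm] at hw; simpa [Complex.dist_eq] using hw
    have hnorm : ‖(z - w) • (↑u⁻¹ : R)‖ < 1 := by
      rw [norm_smul]
      calc ‖z - w‖ * ‖(↑u⁻¹ : R)‖ ≤ ‖z - w‖ * (‖(↑u⁻¹ : R)‖ + 1) := by
            nlinarith [norm_nonneg (z - w), norm_nonneg (↑u⁻¹ : R)]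
        _ < (‖(↑u⁻¹ : R)‖ + 1)⁻¹ * (‖(↑u⁻¹ : R)‖ + 1) := by
            apply mul_lt_mul_of_pos_right h1; positivity
        _ = 1 := by field_simp
    have hfact : algebraMap ℂ R w - A = (1 - (z - w) • (↑u⁻¹ : R)) * ↑u := by
      rw [sub_mul, one_mul, smul_mul_assoc, Units.inv_mul, hu',
        Algebra.algebraMap_eq_smul_one, Algebra.algebraMap_eq_smul_one, sub_smul]
      abel
    exact aux_key B hBclosed u hfact hnorm (B.smul_mem hmem' _) hmem'
  -- a concrete point of S outside closure W, of large norm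
  obtain ⟨ρ, hρ⟩ := hWcpt.isBounded.subset_closedBall 0
  set c : ℂ := ((max ρ ‖A‖ + 1 : ℝ) : ℂ) with hcdef
  have hρ0 : (0:ℝ) ≤ max ρ ‖A‖ := le_trans (norm_nonneg A) (le_max_right _ _)
  have hcnorm : ‖c‖ = max ρ ‖A‖ + 1 := by
    rw [hcdef, Complex.norm_real, Real.norm_eq_abs, abs_of_nonneg (by linarith)]
  have hc0 : c ≠ 0 := by
    intro h; rw [h, norm_zero] at hcnorm; linarith
  have hcW : c ∈ (closure W)ᶜ := by
    intro hmem
    have h2 := hρ hmem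
    rw [Metric.mem_closedBall, dist_zero_right, hcnorm] at h2
    have h3 : ρ ≤ max ρ ‖A‖ := le_max_left _ _
    linarith
  have hcS : c ∈ S := by
    set uc : Rˣ := Units.map (algebraMap ℂ R).toMonoidHom (Units.mk0 c hc0) with hucdef
    have hucval : (↑uc : R) = algebraMap ℂ R c := by simp [hucdef]
    have hucinv : (↑uc⁻¹ : R) = algebraMap ℂ R c⁻¹ := by simp [hucdef]
    have htnorm : ‖(c⁻¹ • A : R)‖ < 1 := by
      rw [norm_smul, norm_inv, hcnorm]
      have hA : ‖A‖ < max ρ ‖A‖ + 1 := by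
        have := le_max_right ρ ‖A‖; linarith
      rw [inv_mul_lt_iff₀ (by linarith), mul_one]
      exact hA
    have hfact : algebraMap ℂ R c - A = (1 - c⁻¹ • A) * ↑uc := by
      rw [hucval, sub_mul, one_mul, smul_mul_assoc, ← Algebra.commutes, ← Algebra.smul_def,
        smul_smul, inv_mul_cancel₀ hc0, one_smul]
    exact aux_key B hBclosed uc hfact htnorm (B.smul_mem hAB _)
      (by rw [hucinv]; exact Subalgebra.algebraMap_mem B _)
  -- connectedness argument on the subtype
  haveI : PreconnectedSpace ((closure W)ᶜ : Set ℂ) :=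
    Subtype.preconnectedSpace hconn.isPreconnected
  have hcontr : ContinuousOn r ((closure W)ᶜ) := by
    intro z hz
    obtain ⟨u, hu⟩ := hres z hz
    have h1 : ContinuousAt Ring.inverse (algebraMap ℂ R z - A) :=
      hu ▸ NormedRing.inverse_continuousAt u
    have h2 : ContinuousAt (fun z : ℂ => algebraMap ℂ R z - A) z :=
      ((continuous_algebraMap ℂ R).sub continuous_const).continuousAt
    have h3 : ContinuousAt (fun w : ℂ => Ring.inverse (algebraMap ℂ R w - A)) z := Filter.Tendsto.comp h1 h2
    exact h3.continuousWithinAt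
  set S' : Set ((closure W)ᶜ : Set ℂ) := Subtype.val ⁻¹' S with hS'def
  have hS'eq : S' = (fun x : ((closure W)ᶜ : Set ℂ) => r ↑x) ⁻¹' (B : Set R) := by
    ext x
    simp only [hS'def, Set.mem_preimage, hSdef, Set.mem_setOf_eq, SetLike.mem_coe]
    exact ⟨fun h => h.2, fun h => ⟨hres _ x.2, h⟩⟩
  have hclopen : IsClopen S' := by
    constructor
    · rw [hS'eq]
      exact hBclosed.preimage hcontr.restrict
    · exact hSopen.preimage continuous_subtype_val
  have huniv : S' = Set.univ := hclopen.eq_univ ⟨⟨c, hcW⟩, hcS⟩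
  intro z hz
  have : (⟨z, hz⟩ : ((closure W)ᶜ : Set ℂ)) ∈ S' := huniv ▸ Set.mem_univ _
  exact this.2

end aux

/-- Corollary 2.2: if `A` is of `K`-class then for every `g` the (unique) solution `f` of
`A f = g` lies in the closure of the Krylov subspace `K(A,g)`. -/
theorem stmt12 {H : Type*} [NormedAddCommGroup H] [InnerProductSpace ℂ H]
    [CompleteSpace H] (A : H →L[ℂ] H) (W : Set ℂ) (hWopen : IsOpen W)
    (hspec : spectrum ℂ A ⊆ W) (hWcpt : IsCompact (closure W))
    (h0 : (0 : ℂ) ∉ closure W) (hconn : IsConnected ((closure W)ᶜ))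
    (g f : H) (hf : A f = g) :
    f ∈ (Submodule.span ℂ (Set.range fun k : ℕ => (A ^ k) g)).topologicalClosure := by
  obtain (hsub | hnt) := subsingleton_or_nontrivial H
  · have : f = 0 := Subsingleton.elim f 0
    rw [this]; exact Submodule.zero_mem _
  -- the resolvent at 0 lies in the closed algebra generated by A
  have hmem := aux_resolvent_mem A W hspec hWcpt hconn 0 h0
  set N : H →L[ℂ] H := algebraMap ℂ (H →L[ℂ] H) 0 - A with hNdef
  have huN : IsUnit N := by
    by_contra h
    exact h0 (subset_closure (hspec (spectrum.mem_iff.mpr h)))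
  -- f = -(Ring.inverse N) g
  have hNf : N f = -g := by
    rw [hNdef]
    simp [hf]
  have hfval : f = -(Ring.inverse N g) := by
    have h1 : Ring.inverse N (N f) = f := by
      rw [← ContinuousLinearMap.mul_apply, Ring.inverse_mul_cancel _ huN,
        ContinuousLinearMap.one_apply]
    rw [← h1, hNf, map_neg]
  -- elements of the polynomial algebra applied to g lie in the Krylov span
  have hpoly : ∀ T ∈ Algebra.adjoin ℂ {A},
      T g ∈ (Submodule.span ℂ (Set.range fun k : ℕ => (A ^ k) g) : Set H) := by
    intro T hT
    rw [Algebra.adjoin_singleton_eq_range_aeval] at hT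
    obtain ⟨p, rfl⟩ := hT
    show ((Polynomial.aeval A) p) g ∈ _
    rw [Polynomial.aeval_eq_sum_range, ContinuousLinearMap.sum_apply]
    refine sum_mem fun i _ => ?_
    rw [ContinuousLinearMap.smul_apply]
    exact Submodule.smul_mem _ _ (Submodule.subset_span ⟨i, rfl⟩)
  -- push through the continuous evaluation map
  have hclos : Ring.inverse N ∈ closure ((Algebra.adjoin ℂ {A} : Subalgebra ℂ (H →L[ℂ] H)) : Set (H →L[ℂ] H)) := by
    rw [← Subalgebra.topologicalClosure_coe]
    exact hmem
  have hev : Ring.inverse N g ∈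
      closure ((Submodule.span ℂ (Set.range fun k : ℕ => (A ^ k) g) : Submodule ℂ H) : Set H) := by
    have hcont : Continuous fun T : H →L[ℂ] H => T g :=
      (ContinuousLinearMap.apply ℂ H g).continuous
    exact map_mem_closure (f := fun T : H →L[ℂ] H => T g) hcont hclos hpoly
  rw [hfval]
  have : Ring.inverse N g ∈ (Submodule.span ℂ (Set.range fun k : ℕ => (A ^ k) g)).topologicalClosure := by
    rw [← SetLike.mem_coe, Submodule.topologicalClosure_coe]
    exact hev
  exact neg_mem this
end

section
/- Let A be a densely defined closed operator on H, g ∈ ran A ∩ C^∞(A), and f ∈ D(A) with A f = g. If (A,g) satisfies the Krylov-core condition and f ∈ closure(K(A,g)), then the norm closure of A·K(A,g) equals the closure of K(A,g). -/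
/-!
The Krylov space `K = span {Aᵏ g}` is mapped into itself by `A`, so `closure (A K) ⊆ closure K`.
Conversely `A K` contains every `Aᵏ⁺¹ g`, and it only remains to approximate `g = A f` by
elements of `A K`. Since `f ∈ closure K ∩ D(A)`, the core condition puts `(f, g)` in the graph
closure of `A|K`, and projecting to the second coordinate gives `g ∈ closure (A K)`.
-/

open Submodule

namespace LinearPMap

section Algebra

variable {R E F : Type*} [CommRing R] [AddCommGroup E] [Module R E] [AddCommGroup F] [Module R F]

theorem range_domRestrict (A : E →ₗ.[R] F) (K : Submodule R E) :
    Set.range (A.domRestrict K) =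
      {y | ∃ x, ∃ hx : x ∈ A.domain, x ∈ K ∧ A ⟨x, hx⟩ = y} := by
  ext y
  constructor
  · rintro ⟨⟨x, hxK, hxA⟩, rfl⟩
    exact ⟨x, hxA, hxK, rfl⟩
  · rintro ⟨x, hxA, hxK, rfl⟩
    exact ⟨⟨x, hxK, hxA⟩, rfl⟩

theorem exists_mem_domain_apply_mem_span {A : E →ₗ.[R] E} {s : Set E}
    (hs : ∀ x ∈ s, ∃ hx : x ∈ A.domain, A ⟨x, hx⟩ ∈ span R s) :
    ∀ x ∈ span R s, ∃ hx : x ∈ A.domain, A ⟨x, hx⟩ ∈ span R s := by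
  have hle : span R s ≤ ((span R s).comap A.toFun).map A.domain.subtype := by
    refine span_le.2 fun x hx => ?_
    obtain ⟨hxA, hAx⟩ := hs x hx
    exact ⟨⟨x, hxA⟩, hAx, rfl⟩
  intro x hx
  obtain ⟨⟨x, hxA⟩, hAx, rfl⟩ := hle hx
  exact ⟨hxA, hAx⟩

theorem range_domRestrict_span_subset {A : E →ₗ.[R] E} {s : Set E}
    (hs : ∀ x ∈ s, ∃ hx : x ∈ A.domain, A ⟨x, hx⟩ ∈ span R s) :
    Set.range (A.domRestrict (span R s)) ⊆ span R s := by
  rintro _ ⟨⟨x, hxK, hxA⟩, rfl⟩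
  obtain ⟨_, hAx⟩ := exists_mem_domain_apply_mem_span hs x hxK
  exact hAx

end Algebra

section Topology

variable {R E F : Type*} [CommRing R] [AddCommGroup E] [Module R E] [AddCommGroup F] [Module R F]
  [TopologicalSpace E] [TopologicalSpace F]

theorem snd_mem_closure_range_of_mem_closure_graph {T : E →ₗ.[R] F} {p : E × F}
    (hp : p ∈ _root_.closure (T.graph : Set (E × F))) :
    p.2 ∈ _root_.closure (Set.range T) := by
  have hsnd : Prod.snd '' (T.graph : Set (E × F)) ⊆ Set.range T := by
    rintro _ ⟨⟨x, y⟩, hxy, rfl⟩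
    exact mem_range_iff.2 ⟨x, hxy⟩
  exact closure_mono hsnd (image_closure_subset_closure_image continuous_snd ⟨p, hp, rfl⟩)

variable [ContinuousAdd E] [ContinuousAdd F] [TopologicalSpace R] [ContinuousSMul R E]
  [ContinuousSMul R F]

theorem apply_mem_closure_range_domRestrict {A : E →ₗ.[R] F} (hA : A.IsClosable)
    {K : Submodule R E}
    (hcore : (A.domRestrict K).closure = A.domRestrict K.topologicalClosure)
    {x : E} (hxK : x ∈ K.topologicalClosure) (hxA : x ∈ A.domain) :
    A ⟨x, hxA⟩ ∈ _root_.closure (Set.range (A.domRestrict K)) := by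
  have hclosable : (A.domRestrict K).IsClosable := hA.leIsClosable domRestrict_le
  have hgraph : (x, A ⟨x, hxA⟩) ∈ (A.domRestrict K).graph.topologicalClosure := by
    rw [hclosable.graph_closure_eq_closure_graph, hcore]
    exact (A.domRestrict K.topologicalClosure).mem_graph ⟨x, hxK, hxA⟩
  exact snd_mem_closure_range_of_mem_closure_graph hgraph

end Topology

end LinearPMap

theorem stmt17_general {H : Type*} [NormedAddCommGroup H] [InnerProductSpace ℂ H]
    (A : H →ₗ.[ℂ] H)
    (hAc : A.IsClosed)
    (g : H) (gs : ℕ → H) (h0 : gs 0 = g)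
    (horbit : ∀ k : ℕ, ∃ hk : gs k ∈ A.domain, A ⟨gs k, hk⟩ = gs (k + 1))
    (f : H) (hfdom : f ∈ A.domain) (hAf : A ⟨f, hfdom⟩ = g)
    (hcore : (A.domRestrict (Submodule.span ℂ (Set.range gs))).closure
        = A.domRestrict (Submodule.span ℂ (Set.range gs)).topologicalClosure)
    (hfK : f ∈ (Submodule.span ℂ (Set.range gs)).topologicalClosure) :
    closure {y : H | ∃ x : H, ∃ hx : x ∈ A.domain,
        x ∈ Submodule.span ℂ (Set.range gs) ∧ A ⟨x, hx⟩ = y}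
      = closure (Submodule.span ℂ (Set.range gs) : Set H) := by
  set K := span ℂ (Set.range gs)
  rw [← LinearPMap.range_domRestrict]
  have hinv : ∀ x ∈ Set.range gs, ∃ hx : x ∈ A.domain, A ⟨x, hx⟩ ∈ K := by
    rintro _ ⟨k, rfl⟩
    obtain ⟨hk, hAk⟩ := horbit k
    exact ⟨hk, hAk ▸ subset_span ⟨k + 1, rfl⟩⟩
  have hgs : ∀ k, gs k ∈ closure (Set.range (A.domRestrict K)) := by
    rintro (_ | k)
    · exact h0 ▸ hAf ▸
        LinearPMap.apply_mem_closure_range_domRestrict hAc.isClosable hcore hfK hfdom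
    · obtain ⟨hk, hAk⟩ := horbit k
      exact subset_closure ⟨⟨gs k, subset_span ⟨k, rfl⟩, hk⟩, hAk⟩
  have hKS : K ≤ (LinearMap.range (A.domRestrict K).toFun).topologicalClosure :=
    span_le.2 (Set.range_subset_iff.2 hgs)
  exact (closure_mono (LinearPMap.range_domRestrict_span_subset hinv)).antisymm
    (closure_minimal hKS isClosed_closure)

/-- Lemma 4.4: let `A` be densely defined and closed, `g ∈ ran A ∩ C^∞(A)` (with orbit
`gs k = Aᵏ g`), and `f ∈ D(A)` with `A f = g`.  If the pair `(A,g)` satisfies the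
Krylov-core condition (the closure of `A` restricted to `K(A,g)` is the restriction of `A`
to `closure(K(A,g)) ∩ D(A)`) and `f ∈ closure(K(A,g))`, then the norm closure of
`A · K(A,g)` equals the closure of `K(A,g)`. -/
theorem stmt17 {H : Type*} [NormedAddCommGroup H] [InnerProductSpace ℂ H]
    [CompleteSpace H] (A : H →ₗ.[ℂ] H) (hA : Dense (A.domain : Set H))
    (hAc : A.IsClosed)
    (g : H) (gs : ℕ → H) (h0 : gs 0 = g)
    (horbit : ∀ k : ℕ, ∃ hk : gs k ∈ A.domain, A ⟨gs k, hk⟩ = gs (k + 1))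
    (f : H) (hfdom : f ∈ A.domain) (hAf : A ⟨f, hfdom⟩ = g)
    (hcore : (A.domRestrict (Submodule.span ℂ (Set.range gs))).closure
        = A.domRestrict (Submodule.span ℂ (Set.range gs)).topologicalClosure)
    (hfK : f ∈ (Submodule.span ℂ (Set.range gs)).topologicalClosure) :
    closure {y : H | ∃ x : H, ∃ hx : x ∈ A.domain,
        x ∈ Submodule.span ℂ (Set.range gs) ∧ A ⟨x, hx⟩ = y}
      = closure (Submodule.span ℂ (Set.range gs) : Set H) :=
  stmt17_general A hAc g gs h0 horbit f hfdom hAf hcore hfK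
end

section
/- Let A be a self-adjoint operator on H admitting a real point ξ in its resolvent set, let A be injective, g ∈ ran A, and f the unique solution to A f = g. Then f lies in the closed span of the vectors (A − ξ)^{-m} g, m ∈ ℕ. -/
open scoped InnerProductSpace
open Module End

/-!
Let `K` be the closed span of the vectors `Rᵐ⁺¹ g`, where `R = (A - ξ)⁻¹`. It is `R`-invariant,
and since `R` is symmetric so is `Kᗮ`. Applying `R` to `(A - ξ) f = g - ξ f` gives
`f + ξ R f = R g ∈ K`, so the component `w` of `f` in `Kᗮ` satisfies `w + ξ R w ∈ K ∩ Kᗮ = 0`.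
Then `A (R w) = w + ξ R w = 0`, and injectivity of `A` forces `R w = 0`, hence `w = 0`.
-/

section InnerProduct

variable {𝕜 E : Type*} [RCLike 𝕜] [NormedAddCommGroup E] [InnerProductSpace 𝕜 E]

theorem IsSelfAdjoint.isFormalAdjoint [CompleteSpace E] {A : E →ₗ.[𝕜] E}
    (hA : IsSelfAdjoint A) : A.IsFormalAdjoint A := by
  have h := LinearPMap.adjoint_isFormalAdjoint hA.dense_domain (T := A)
  rwa [LinearPMap.isSelfAdjoint_def.mp hA] at h

theorem LinearPMap.IsFormalAdjoint.isSymmetric_of_rightInverse_sub_smul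
    {A : E →ₗ.[𝕜] E} (hA : A.IsFormalAdjoint A) (ξ : ℝ) {R : E →ₗ[𝕜] E}
    (hR : ∀ y : E, ∃ h : R y ∈ A.domain, A ⟨R y, h⟩ - (ξ : 𝕜) • R y = y) :
    R.IsSymmetric := by
  intro x y
  obtain ⟨hx, hAx⟩ := hR x
  obtain ⟨hy, hAy⟩ := hR y
  calc ⟪R x, y⟫_𝕜 = ⟪R x, A ⟨R y, hy⟩ - (ξ : 𝕜) • R y⟫_𝕜 := by rw [hAy]
    _ = ⟪A ⟨R x, hx⟩ - (ξ : 𝕜) • R x, R y⟫_𝕜 := by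
      rw [inner_sub_right, inner_smul_right, inner_sub_left, inner_smul_left, RCLike.conj_ofReal,
        hA ⟨R x, hx⟩ ⟨R y, hy⟩]
    _ = ⟪x, R y⟫_𝕜 := by rw [hAx]

theorem Submodule.mem_of_add_smul_mem {K : Submodule 𝕜 E} [K.HasOrthogonalProjection]
    {T : E →ₗ[𝕜] E} (hT : T.IsSymmetric) (hK : K ∈ invtSubmodule T) {c : 𝕜}
    (hinj : ∀ w, w + c • T w = 0 → w = 0) {v : E} (hv : v + c • T v ∈ K) : v ∈ K := by
  set p := K.starProjection v
  have hp : p ∈ K := K.starProjection_apply_mem v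
  have hw : v - p ∈ Kᗮ := K.sub_starProjection_mem_orthogonal v
  have hwK : v - p + c • T (v - p) ∈ K := by
    have h : v - p + c • T (v - p) = (v + c • T v) - (p + c • T p) := by
      rw [map_sub]; module
    rw [h]
    exact sub_mem hv (add_mem hp (K.smul_mem c (hK hp)))
  have hwKperp : v - p + c • T (v - p) ∈ Kᗮ :=
    add_mem hw (Kᗮ.smul_mem c (hT.orthogonalComplement_mem_invtSubmodule hK hw))
  have hvp : v - p = 0 := hinj _ (Submodule.disjoint_def.mp K.orthogonal_disjoint _ hwK hwKperp)
  rwa [sub_eq_zero.mp hvp]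

end InnerProduct

theorem LinearPMap.eq_zero_of_add_smul_rightInverse_eq_zero {R E : Type*} [Ring R]
    [AddCommGroup E] [Module R E] {A : E →ₗ.[R] E}
    (hinj : ∀ (x : E) (hx : x ∈ A.domain), A ⟨x, hx⟩ = 0 → x = 0) {c : R} {T : E →ₗ[R] E}
    (hT : ∀ y : E, ∃ h : T y ∈ A.domain, A ⟨T y, h⟩ - c • T y = y) {w : E}
    (hw : w + c • T w = 0) : w = 0 := by
  obtain ⟨hTw, hATw⟩ := hT w
  have hTw0 : T w = 0 := hinj _ hTw (by rw [eq_add_of_sub_eq hATw, hw])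
  rwa [hTw0, smul_zero, add_zero] at hw

theorem Submodule.span_range_pow_succ_apply_mem_invtSubmodule {R M : Type*} [Semiring R]
    [AddCommMonoid M] [Module R M] (T : M →ₗ[R] M) (g : M) :
    span R (Set.range fun m : ℕ => (T ^ (m + 1)) g) ∈ invtSubmodule T := by
  rw [mem_invtSubmodule, span_le]
  rintro _ ⟨m, rfl⟩
  exact subset_span ⟨m + 1, by simp only [pow_succ' T (m + 1), Module.End.mul_apply]⟩

/-- Proposition 4.6: let `A` be an injective self-adjoint operator on `H` with a real point
`ξ` in its resolvent set (witnessed by the bounded resolvent operator `R = (A − ξ)⁻¹`),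
let `g ∈ ran A` and let `f` be the unique solution of `A f = g`.  Then `f` lies in the
closed span of the vectors `(A − ξ)^{-m} g`, `m ≥ 1`. -/
theorem stmt18 {H : Type*} [NormedAddCommGroup H] [InnerProductSpace ℂ H]
    [CompleteSpace H] (A : H →ₗ.[ℂ] H) (hsa : A.adjoint = A)
    (hinj : ∀ (x : H) (hx : x ∈ A.domain), A ⟨x, hx⟩ = 0 → x = 0)
    (ξ : ℝ) (R : H →L[ℂ] H)
    (hR1 : ∀ y : H, ∃ h : R y ∈ A.domain, A ⟨R y, h⟩ - (ξ : ℂ) • R y = y)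
    (hR2 : ∀ (x : H) (hx : x ∈ A.domain), R (A ⟨x, hx⟩ - (ξ : ℂ) • x) = x)
    (g f : H) (hfdom : f ∈ A.domain) (hAf : A ⟨f, hfdom⟩ = g) :
    f ∈ (Submodule.span ℂ (Set.range fun m : ℕ => (R ^ (m + 1)) g)).topologicalClosure := by
  set S := Submodule.span ℂ (Set.range fun m : ℕ => (R ^ (m + 1)) g)
  have hRsym : (R : H →ₗ[ℂ] H).IsSymmetric :=
    (IsSelfAdjoint.isFormalAdjoint hsa).isSymmetric_of_rightInverse_sub_smul ξ hR1
  have hS : S ∈ invtSubmodule (R : H →ₗ[ℂ] H) := by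
    simpa only [← ContinuousLinearMap.toLinearMap_pow, ContinuousLinearMap.coe_coe] using
      Submodule.span_range_pow_succ_apply_mem_invtSubmodule (R : H →ₗ[ℂ] H) g
  have hRg : R g = f + (ξ : ℂ) • R f := by
    calc R g = R ((A ⟨f, hfdom⟩ - (ξ : ℂ) • f) + (ξ : ℂ) • f) := by rw [sub_add_cancel, hAf]
      _ = f + (ξ : ℂ) • R f := by rw [map_add, map_smul, hR2]
  have hRgK : R g ∈ S.topologicalClosure :=
    S.le_topologicalClosure (Submodule.subset_span ⟨0, by simp only [zero_add, pow_one]⟩)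
  have hinj' : ∀ w, w + (ξ : ℂ) • R w = 0 → w = 0 := fun _ hw =>
    LinearPMap.eq_zero_of_add_smul_rightInverse_eq_zero hinj hR1 hw
  exact S.topologicalClosure.mem_of_add_smul_mem hRsym
    (S.topologicalClosure_mem_invtSubmodule hS) hinj' (hRg ▸ hRgK)
end
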